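/- Let T ∈ L(H) be a Riesz operator on a separable infinite-dimensional complex Hilbert space H, i.e. for every λ ∈ ℂ with λ ≠ 0 the operator T − λI is Fredholm. Then T is not a universal operator. -/

import Mathlib

/-! Applied to the identity, universality of `U` yields an eigenvalue `c ≠ 0` of `U` whose
eigenspace contains an isomorphic copy of the whole space, hence is infinite-dimensional.
For a Riesz operator every nonzero eigenspace is the kernel of a Fredholm operator, hence
finite-dimensional. -/

noncomputable section

/-- Universal operator on a complex Hilbert space. -/
def IsUniversal {H : Type*} [NormedAddCommGroup H] [InnerProductSpace ℂ H]
    (U : H →L[ℂ] H) : Prop :=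
  ∀ T : H →L[ℂ] H, ∃ M : Submodule ℂ H, IsClosed (M : Set H) ∧ (∀ x ∈ M, U x ∈ M) ∧
    ∃ c : ℂ, c ≠ 0 ∧ ∃ J : H ≃L[ℂ] M, ∀ x : H, U (J x : H) = c • ((J (T x) : H))

/-- A bounded operator is Fredholm if its kernel is finite-dimensional and its range is
closed of finite codimension. -/
def IsFredholmOp {H : Type*} [NormedAddCommGroup H] [InnerProductSpace ℂ H]
    (S : H →L[ℂ] H) : Prop :=
  FiniteDimensional ℂ (LinearMap.ker (S : H →ₗ[ℂ] H)) ∧ IsClosed (LinearMap.range (S : H →ₗ[ℂ] H) : Set H) ∧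
    FiniteDimensional ℂ (H ⧸ LinearMap.range (S : H →ₗ[ℂ] H))

namespace IsUniversal

variable {H : Type*} [NormedAddCommGroup H] [InnerProductSpace ℂ H] {U : H →L[ℂ] H}

theorem exists_ne_zero_le_ker_sub_smul (hU : IsUniversal U) :
    ∃ c : ℂ, c ≠ 0 ∧ ∃ M : Submodule ℂ H, Nonempty (H ≃L[ℂ] M) ∧
      M ≤ LinearMap.ker ((U - c • (1 : H →L[ℂ] H)) : H →ₗ[ℂ] H) := by
  obtain ⟨M, -, -, c, hc, J, hJ⟩ := hU 1
  refine ⟨c, hc, M, ⟨J⟩, fun m hm => ?_⟩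
  have hUm : U m = c • m := by simpa using hJ (J.symm ⟨m, hm⟩)
  simp [LinearMap.mem_ker, hUm]

theorem not_finiteDimensional_ker_sub_smul (hU : IsUniversal U)
    (hinf : ¬ FiniteDimensional ℂ H) :
    ∃ c : ℂ, c ≠ 0 ∧
      ¬ FiniteDimensional ℂ (LinearMap.ker ((U - c • (1 : H →L[ℂ] H)) : H →ₗ[ℂ] H)) := by
  obtain ⟨c, hc, M, ⟨J⟩, hM⟩ := hU.exists_ne_zero_le_ker_sub_smul
  refine ⟨c, hc, fun hker => hinf ?_⟩
  have : FiniteDimensional ℂ M := Submodule.finiteDimensional_of_le hM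
  exact J.symm.toLinearEquiv.finiteDimensional

end IsUniversal

theorem not_universal_of_riesz {H : Type*} [NormedAddCommGroup H]
    [InnerProductSpace ℂ H]
    (hinf : ¬ FiniteDimensional ℂ H)
    (T : H →L[ℂ] H)
    (h : ∀ z : ℂ, z ≠ 0 → IsFredholmOp (T - z • (1 : H →L[ℂ] H))) :
    ¬ IsUniversal T := fun hT => by
  obtain ⟨c, hc, hker⟩ := hT.not_finiteDimensional_ker_sub_smul hinf
  exact hker (h c hc).1

end
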